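/- arXiv:1006.1370 — 5 statements merged into one kernel-verified Lean document; each statement's English description precedes it below -/
import Mathlib

section
/- Let λ ∈ ℝ and define u_0 = 0, u_1 = 1, and recursively b_ℓ u_{ℓ+1} = (λ − a_ℓ) u_ℓ − c_{ℓ−1} u_{ℓ−1} for 1 ≤ ℓ ≤ k−1 (where the term c_{ℓ−1} u_{ℓ−1} is interpreted as 0 when ℓ = 1). Then λ is an eigenvalue of M if and only if (λ − a_k) u_k − c_{k−1} u_{k−1} = 0. -/
open Matrix

/-!
An eigenvector `w` of the tridiagonal matrix, read as a sequence `x₀ = 0, x₁ = w₀, …, x_k = w_{k-1},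
x_{k+1} = 0`, satisfies the three-term recurrence `c_ℓ x_ℓ + a_{ℓ+1} x_{ℓ+1} + b_{ℓ+1} x_{ℓ+2} =
λ x_{ℓ+1}` for `ℓ < k`. As the `b_ℓ` do not vanish, the first `k - 1` of these equations determine the
sequence from `x₁`, so `x = x₁ • u` on `0, …, k`, and `x₁ ≠ 0`. The last equation is then
`x₁ · ((λ - a_k) u_k - c_{k-1} u_{k-1}) = 0`; conversely `u` itself gives an eigenvector once this
quantity vanishes.
-/

namespace Tridiagonal

def oneBased {k : ℕ} (w : Fin k → ℝ) : ℕ → ℝ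
  | 0 => 0
  | n + 1 => if h : n < k then w ⟨n, h⟩ else 0

section oneBased

variable {k : ℕ} (w : Fin k → ℝ)

@[simp]
lemma oneBased_zero : oneBased w 0 = 0 := rfl

lemma oneBased_succ_of_lt {n : ℕ} (hn : n < k) : oneBased w (n + 1) = w ⟨n, hn⟩ := dif_pos hn

lemma oneBased_succ_of_le {n : ℕ} (hn : k ≤ n) : oneBased w (n + 1) = 0 := dif_neg (by omega)

lemma sum_ite_val_add_one_eq (n : ℕ) :
    ∑ j : Fin k, (if (j : ℕ) + 1 = n then w j else 0) = oneBased w n := by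
  cases n with
  | zero => simp
  | succ n =>
    simp only [Nat.add_right_cancel_iff]
    by_cases hn : n < k
    · rw [oneBased_succ_of_lt w hn, Finset.sum_eq_single ⟨n, hn⟩ (fun j _ hj => if_neg
        fun h => hj (Fin.ext h)) (by simp)]
      simp
    · rw [oneBased_succ_of_le w (not_lt.mp hn)]
      exact Finset.sum_eq_zero fun j _ => if_neg fun (h : (j : ℕ) = n) => hn (h ▸ j.isLt)

lemma eq_zero_of_oneBased_eq_zero (h : ∀ n, 1 ≤ n → n ≤ k → oneBased w n = 0) : w = 0 := by
  funext j
  rw [← oneBased_succ_of_lt w j.isLt]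
  exact h _ (by omega) (by omega)

end oneBased

def tridiag (k : ℕ) (a b c : ℕ → ℝ) : Matrix (Fin k) (Fin k) ℝ :=
  Matrix.of fun i j =>
    if (i : ℕ) = (j : ℕ) then a ((i : ℕ) + 1)
    else if (j : ℕ) = (i : ℕ) + 1 then b ((i : ℕ) + 1)
    else if (i : ℕ) = (j : ℕ) + 1 then c ((j : ℕ) + 1)
    else 0

def defect (a b c : ℕ → ℝ) (lam : ℝ) (x : ℕ → ℝ) (ℓ : ℕ) : ℝ :=
  c ℓ * x ℓ + a (ℓ + 1) * x (ℓ + 1) + b (ℓ + 1) * x (ℓ + 2) - lam * x (ℓ + 1)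

section

variable {k : ℕ} {a b c : ℕ → ℝ} {lam : ℝ}

lemma tridiag_mulVec_apply (w : Fin k → ℝ) (i : ℕ) (hi : i < k) :
    (tridiag k a b c *ᵥ w) ⟨i, hi⟩ =
      c i * oneBased w i + a (i + 1) * oneBased w (i + 1) + b (i + 1) * oneBased w (i + 2) := by
  have hentry : ∀ j : Fin k, tridiag k a b c ⟨i, hi⟩ j * w j =
      c i * (if (j : ℕ) + 1 = i then w j else 0)
        + a (i + 1) * (if (j : ℕ) + 1 = i + 1 then w j else 0)
        + b (i + 1) * (if (j : ℕ) + 1 = i + 2 then w j else 0) := by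
    intro j
    simp only [tridiag, of_apply]
    split_ifs <;> first | omega | (subst_vars; ring)
  simp only [mulVec, dotProduct, hentry, Finset.sum_add_distrib, ← Finset.mul_sum,
    sum_ite_val_add_one_eq]

lemma tridiag_mulVec_eq_smul_iff (w : Fin k → ℝ) :
    tridiag k a b c *ᵥ w = lam • w ↔ ∀ i < k, defect a b c lam (oneBased w) i = 0 := by
  simp only [funext_iff, Fin.forall_iff, tridiag_mulVec_apply, Pi.smul_apply, smul_eq_mul,
    defect, sub_eq_zero]
  refine forall₂_congr fun i hi => ?_
  rw [oneBased_succ_of_lt w hi]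

lemma defect_sub_smul (x y : ℕ → ℝ) (t : ℝ) (ℓ : ℕ) :
    defect a b c lam (x - t • y) ℓ = defect a b c lam x ℓ - t * defect a b c lam y ℓ := by
  simp only [defect, Pi.sub_apply, Pi.smul_apply, smul_eq_mul]
  ring

lemma eq_zero_of_defect_eq_zero {n : ℕ} (hb : ∀ ℓ < n, b (ℓ + 1) ≠ 0) {z : ℕ → ℝ}
    (h0 : z 0 = 0) (h1 : z 1 = 0) (hz : ∀ ℓ < n, defect a b c lam z ℓ = 0) :
    ∀ m ≤ n + 1, z m = 0 := by
  refine Nat.twoStepInduction (fun _ => h0) (fun _ => h1) fun m ihm ihm1 hm => ?_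
  have hrow := hz m (by omega)
  simp only [defect, ihm (by omega), ihm1 (by omega), mul_zero, add_zero, zero_add,
    sub_zero] at hrow
  exact (mul_eq_zero.mp hrow).resolve_left (hb m (by omega))

lemma defect_congr {x y : ℕ → ℝ} {ℓ : ℕ} (h : ∀ m ≤ ℓ + 2, x m = y m) :
    defect a b c lam x ℓ = defect a b c lam y ℓ := by
  simp only [defect, h ℓ (by omega), h (ℓ + 1) (by omega), h (ℓ + 2) le_rfl]

lemma defect_of_eq_zero {x : ℕ → ℝ} {ℓ : ℕ} (h : x (ℓ + 2) = 0) :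
    defect a b c lam x ℓ = -((lam - a (ℓ + 1)) * x (ℓ + 1) - c ℓ * x ℓ) := by
  rw [defect, h]
  ring

lemma defect_eq_zero_of_recursion {u : ℕ → ℝ} (hu0 : u 0 = 0) {ℓ : ℕ} (hℓ : 1 ≤ ℓ)
    (h : b ℓ * u (ℓ + 1) = (lam - a ℓ) * u ℓ - (if ℓ = 1 then 0 else c (ℓ - 1) * u (ℓ - 1))) :
    defect a b c lam u (ℓ - 1) = 0 := by
  obtain ⟨ℓ, rfl⟩ : ∃ m, ℓ = m + 1 := ⟨ℓ - 1, by omega⟩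
  have hc_term : (if ℓ + 1 = 1 then 0 else c ℓ * u ℓ) = c ℓ * u ℓ := by
    split_ifs with hℓ0
    · rw [show ℓ = 0 by omega, hu0, mul_zero]
    · rfl
  rw [Nat.add_sub_cancel, hc_term] at h
  rw [Nat.add_sub_cancel, defect]
  linear_combination h

variable {n : ℕ} {u : ℕ → ℝ}

lemma eq_smul_of_defect_eq_zero (hb : ∀ ℓ < n, b (ℓ + 1) ≠ 0) (hu0 : u 0 = 0) (hu1 : u 1 = 1)
    (hu : ∀ ℓ < n, defect a b c lam u ℓ = 0) {x : ℕ → ℝ} (hx0 : x 0 = 0)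
    (hx : ∀ ℓ < n, defect a b c lam x ℓ = 0) :
    ∀ m ≤ n + 1, x m = x 1 * u m := by
  intro m hm
  have hz := eq_zero_of_defect_eq_zero hb (z := x - x 1 • u) (by simp [hx0, hu0])
    (by simp [hu1]) (fun ℓ hℓ => by rw [defect_sub_smul, hx ℓ hℓ, hu ℓ hℓ, mul_zero, sub_zero])
    m hm
  simpa [sub_eq_zero] using hz

lemma eq_zero_of_tridiag_mulVec_eq_smul (hb : ∀ ℓ < n, b (ℓ + 1) ≠ 0) (hu0 : u 0 = 0)
    (hu1 : u 1 = 1) (hu : ∀ ℓ < n, defect a b c lam u ℓ = 0) {w : Fin (n + 1) → ℝ} (hw0 : w ≠ 0)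
    (hw : tridiag (n + 1) a b c *ᵥ w = lam • w) :
    (lam - a (n + 1)) * u (n + 1) - c n * u n = 0 := by
  rw [tridiag_mulVec_eq_smul_iff] at hw
  have hx := eq_smul_of_defect_eq_zero hb hu0 hu1 hu (oneBased_zero w) fun ℓ hℓ => hw ℓ (by omega)
  have hx1 : oneBased w 1 ≠ 0 := fun h =>
    hw0 (eq_zero_of_oneBased_eq_zero w fun m _ hm => by rw [hx m hm, h, zero_mul])
  have hlast := hw n (by omega)
  rw [defect_of_eq_zero (oneBased_succ_of_le w le_rfl), hx (n + 1) le_rfl, hx n (by omega),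
    neg_eq_zero] at hlast
  refine (mul_eq_zero.mp ?_).resolve_left hx1
  linear_combination hlast

lemma tridiag_mulVec_eq_smul_of_defect_eq_zero (hu0 : u 0 = 0)
    (hu : ∀ ℓ < n, defect a b c lam u ℓ = 0)
    (hlast : (lam - a (n + 1)) * u (n + 1) - c n * u n = 0) :
    tridiag (n + 1) a b c *ᵥ (fun j : Fin (n + 1) => u ((j : ℕ) + 1))
      = lam • fun j : Fin (n + 1) => u ((j : ℕ) + 1) := by
  have hv : ∀ m ≤ n + 1, oneBased (fun j : Fin (n + 1) => u ((j : ℕ) + 1)) m = u m := by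
    rintro (_ | m) hm
    · exact hu0.symm
    · exact oneBased_succ_of_lt _ (by omega)
  rw [tridiag_mulVec_eq_smul_iff]
  intro ℓ hℓ
  rcases Nat.lt_or_ge ℓ n with hlt | hge
  · rw [defect_congr fun m hm => hv m (by omega)]
    exact hu ℓ hlt
  · rw [show ℓ = n by omega, defect_of_eq_zero (oneBased_succ_of_le _ le_rfl), hv (n + 1) le_rfl,
      hv n (by omega), hlast, neg_zero]

end

end Tridiagonal

open Tridiagonal

theorem tridiagonal_eigenvalue_iff_recursion_general
    (k : ℕ) (hk : 2 ≤ k) (a b c : ℕ → ℝ)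
    (hb : ∀ ℓ, 1 ≤ ℓ → ℓ ≤ k - 1 → 0 < b ℓ)
    (M : Matrix (Fin k) (Fin k) ℝ)
    (hM : ∀ i j : Fin k, M i j =
      if (i : ℕ) = (j : ℕ) then a ((i : ℕ) + 1)
      else if (j : ℕ) = (i : ℕ) + 1 then b ((i : ℕ) + 1)
      else if (i : ℕ) = (j : ℕ) + 1 then c ((j : ℕ) + 1)
      else 0)
    (lam : ℝ) (u : ℕ → ℝ) (h0 : u 0 = 0) (h1 : u 1 = 1)
    (hrec : ∀ ℓ, 1 ≤ ℓ → ℓ ≤ k - 1 →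
      b ℓ * u (ℓ + 1)
        = (lam - a ℓ) * u ℓ - (if ℓ = 1 then 0 else c (ℓ - 1) * u (ℓ - 1))) :
    (∃ w : Fin k → ℝ, w ≠ 0 ∧ M.mulVec w = lam • w) ↔
      (lam - a k) * u k - c (k - 1) * u (k - 1) = 0 := by
  obtain rfl : M = tridiag k a b c := Matrix.ext hM
  obtain ⟨n, rfl⟩ : ∃ n, k = n + 1 := ⟨k - 1, by omega⟩
  simp only [Nat.add_sub_cancel] at hb hrec ⊢
  have hb' : ∀ ℓ < n, b (ℓ + 1) ≠ 0 := fun ℓ hℓ => (hb (ℓ + 1) (by omega) (by omega)).ne'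
  have hu : ∀ ℓ < n, defect a b c lam u ℓ = 0 := fun ℓ hℓ => by
    simpa using defect_eq_zero_of_recursion h0 (by omega) (hrec (ℓ + 1) (by omega) (by omega))
  refine ⟨fun ⟨w, hw0, hw⟩ => eq_zero_of_tridiag_mulVec_eq_smul hb' h0 h1 hu hw0 hw,
    fun hlast => ⟨_, fun h => ?_, tridiag_mulVec_eq_smul_of_defect_eq_zero h0 hu hlast⟩⟩
  simpa [h1] using congrFun h 0

/-- For a `k × k` tridiagonal matrix `M` with diagonal `a₁,…,a_k`,
superdiagonal `b₁,…,b_{k-1} > 0` and subdiagonal `c₁,…,c_{k-1} > 0`, define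
`u₀ = 0`, `u₁ = 1` and `b_ℓ u_{ℓ+1} = (λ - a_ℓ) u_ℓ - c_{ℓ-1} u_{ℓ-1}` for
`1 ≤ ℓ ≤ k-1` (the `c`-term being `0` for `ℓ = 1`). Then `λ` is an eigenvalue of `M`
iff `(λ - a_k) u_k - c_{k-1} u_{k-1} = 0`. -/
theorem tridiagonal_eigenvalue_iff_recursion
    (k : ℕ) (hk : 2 ≤ k) (a b c : ℕ → ℝ)
    (hb : ∀ ℓ, 1 ≤ ℓ → ℓ ≤ k - 1 → 0 < b ℓ)
    (hc : ∀ ℓ, 1 ≤ ℓ → ℓ ≤ k - 1 → 0 < c ℓ)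
    (M : Matrix (Fin k) (Fin k) ℝ)
    (hM : ∀ i j : Fin k, M i j =
      if (i : ℕ) = (j : ℕ) then a ((i : ℕ) + 1)
      else if (j : ℕ) = (i : ℕ) + 1 then b ((i : ℕ) + 1)
      else if (i : ℕ) = (j : ℕ) + 1 then c ((j : ℕ) + 1)
      else 0)
    (lam : ℝ) (u : ℕ → ℝ) (h0 : u 0 = 0) (h1 : u 1 = 1)
    (hrec : ∀ ℓ, 1 ≤ ℓ → ℓ ≤ k - 1 →
      b ℓ * u (ℓ + 1)
        = (lam - a ℓ) * u ℓ - (if ℓ = 1 then 0 else c (ℓ - 1) * u (ℓ - 1))) :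
    (∃ w : Fin k → ℝ, w ≠ 0 ∧ M.mulVec w = lam • w) ↔
      (lam - a k) * u k - c (k - 1) * u (k - 1) = 0 :=
  tridiagonal_eigenvalue_iff_recursion_general k hk a b c hb M hM lam u h0 h1 hrec
end

section
/- For every real ℓ with ℓ < n₀, writing k = n₀ − ℓ, one has ρ_ℓ = ε·√(n₁/(n₁ + k)) + i·√(k/(n₁ + k)) and ρ̂_ℓ = √(m₁/(m₁ + k)) + i·√(k/(m₁ + k)), where ε = +1 if μ² ≥ m − n and ε = −1 if μ² ≤ m − n. In particular |ρ_ℓ| = |ρ̂_ℓ| = 1. -/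
/-!
Put `a = (μ² - m + n) / (2μ)` and `b = (μ² + m - n) / (2μ)`. Then `n₁ = a²`, `m₁ = b²`, and the
definition of `n₀` says exactly `n - n₀ - 1/2 = a²`, `m - n₀ - 1/2 = b²`; hence
`s_ℓ = √(a² + k)` and `p_ℓ = √(b² + k)`. So `ρ_ℓ` is the unit vector `(a + i√k) / √(a² + k)`
and `ρ̂_ℓ` is `(b + i√k) / √(b² + k)`, and `ε` is the sign of `a`.
-/

open Complex

lemma div_sqrt_eq_sqrt_sq_div {a : ℝ} (ha : 0 ≤ a) (q : ℝ) : a / √q = √(a ^ 2 / q) := by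
  rw [Real.sqrt_div (sq_nonneg a), Real.sqrt_sq ha]

lemma div_sqrt_eq_neg_sqrt_sq_div {a : ℝ} (ha : a ≤ 0) (q : ℝ) : a / √q = -√(a ^ 2 / q) := by
  rw [← neg_sq, ← div_sqrt_eq_sqrt_sq_div (neg_nonneg.2 ha), neg_div, neg_neg]

lemma one_sub_div_sqrt_sq_add_sq (a : ℝ) {k : ℝ} (hk : 0 ≤ k) (hq : a ^ 2 + k ≠ 0) :
    1 - (a / √(a ^ 2 + k)) ^ 2 = k / (a ^ 2 + k) := by
  rw [div_pow, Real.sq_sqrt (by positivity)]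
  field_simp
  ring

lemma norm_div_sqrt_add_I_mul_sqrt (a : ℝ) {k : ℝ} (hk : 0 ≤ k) (hq : a ^ 2 + k ≠ 0) :
    ‖((a / √(a ^ 2 + k) : ℝ) : ℂ) + I * ((√(k / (a ^ 2 + k)) : ℝ) : ℂ)‖ = 1 := by
  rw [mul_comm, norm_add_mul_I, Real.sq_sqrt (by positivity),
    ← one_sub_div_sqrt_sq_add_sq a hk hq, add_sub_cancel, Real.sqrt_one]

lemma ofReal_div_add_I_mul_sqrt_one_sub_eq {a c μ k : ℝ} (ha : a = c / (2 * μ)) (hk : 0 < k) :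
    ((c / (2 * μ * √(a ^ 2 + k)) : ℝ) : ℂ)
        + I * ((√(1 - c ^ 2 / (4 * μ ^ 2 * √(a ^ 2 + k) ^ 2)) : ℝ) : ℂ)
      = ((a / √(a ^ 2 + k) : ℝ) : ℂ) + I * ((√(k / (a ^ 2 + k)) : ℝ) : ℂ) := by
  have hre : c / (2 * μ * √(a ^ 2 + k)) = a / √(a ^ 2 + k) := by rw [ha, div_div]
  have hsq : c ^ 2 / (4 * μ ^ 2 * √(a ^ 2 + k) ^ 2) = (a / √(a ^ 2 + k)) ^ 2 := by
    rw [hre.symm]; ring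
  rw [hre, hsq, one_sub_div_sqrt_sq_add_sq a hk.le (by positivity)]

theorem rho_formula_general
    (m n μ : ℝ) (hmn : n ≤ m) (hμ : 0 < μ)
    (n₀ n₁ m₁ : ℝ)
    (hn₀ : n₀ + 1 / 2 = (2 * (m + n) * μ ^ 2 - (m - n) ^ 2 - μ ^ 4) / (4 * μ ^ 2))
    (hn₁ : n₁ = (m - n - μ ^ 2) ^ 2 / (4 * μ ^ 2))
    (hm₁ : m₁ = m - n + n₁)
    (ℓ : ℝ) (hℓ : ℓ < n₀) (k : ℝ) (hk : k = n₀ - ℓ)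
    (s p : ℝ) (hs : s = Real.sqrt (n - ℓ - 1 / 2)) (hp : p = Real.sqrt (m - ℓ - 1 / 2))
    (ρ ρhat : ℂ)
    (hρ : ρ = (((μ ^ 2 - m + n) / (2 * μ * s) : ℝ) : ℂ)
        + Complex.I * ((Real.sqrt (1 - (μ ^ 2 - m + n) ^ 2 / (4 * μ ^ 2 * s ^ 2)) : ℝ) : ℂ))
    (hρhat : ρhat = (((μ ^ 2 + m - n) / (2 * μ * p) : ℝ) : ℂ)
        + Complex.I * ((Real.sqrt (1 - (μ ^ 2 + m - n) ^ 2 / (4 * μ ^ 2 * p ^ 2)) : ℝ) : ℂ)) :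
    (m - n ≤ μ ^ 2 →
      ρ = ((Real.sqrt (n₁ / (n₁ + k)) : ℝ) : ℂ)
          + Complex.I * ((Real.sqrt (k / (n₁ + k)) : ℝ) : ℂ)) ∧
    (μ ^ 2 ≤ m - n →
      ρ = ((-Real.sqrt (n₁ / (n₁ + k)) : ℝ) : ℂ)
          + Complex.I * ((Real.sqrt (k / (n₁ + k)) : ℝ) : ℂ)) ∧
    ρhat = ((Real.sqrt (m₁ / (m₁ + k)) : ℝ) : ℂ)
          + Complex.I * ((Real.sqrt (k / (m₁ + k)) : ℝ) : ℂ) ∧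
    ‖ρ‖ = 1 ∧ ‖ρhat‖ = 1 := by
  obtain ⟨a, ha⟩ : ∃ a, a = (μ ^ 2 - m + n) / (2 * μ) := ⟨_, rfl⟩
  obtain ⟨b, hb⟩ : ∃ b, b = (μ ^ 2 + m - n) / (2 * μ) := ⟨_, rfl⟩
  have hk0 : 0 < k := by linarith
  have hn₁a : n₁ = a ^ 2 := by rw [hn₁, ha]; field_simp; ring
  have hm₁b : m₁ = b ^ 2 := by rw [hm₁, hn₁, hb]; field_simp; ring
  have hsa : s = √(a ^ 2 + k) := by
    have : n - (n₀ + 1 / 2) = a ^ 2 := by rw [hn₀, ha]; field_simp; ring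
    rw [hs]; congr 1; linarith
  have hpb : p = √(b ^ 2 + k) := by
    have : m - (n₀ + 1 / 2) = b ^ 2 := by rw [hn₀, hb]; field_simp; ring
    rw [hp]; congr 1; linarith
  have hρa : ρ = ((a / √(a ^ 2 + k) : ℝ) : ℂ) + I * ((√(k / (a ^ 2 + k)) : ℝ) : ℂ) := by
    rw [hρ, hsa]; exact ofReal_div_add_I_mul_sqrt_one_sub_eq ha hk0
  have hρb : ρhat = ((b / √(b ^ 2 + k) : ℝ) : ℂ) + I * ((√(k / (b ^ 2 + k)) : ℝ) : ℂ) := by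
    rw [hρhat, hpb]; exact ofReal_div_add_I_mul_sqrt_one_sub_eq hb hk0
  have hb0 : 0 ≤ b := by rw [hb]; exact div_nonneg (by nlinarith) (by positivity)
  refine ⟨fun h ↦ ?_, fun h ↦ ?_, ?_, ?_, ?_⟩
  · have ha0 : 0 ≤ a := by rw [ha]; exact div_nonneg (by linarith) (by positivity)
    rw [hρa, hn₁a, div_sqrt_eq_sqrt_sq_div ha0]
  · have ha0 : a ≤ 0 := by
      rw [ha]; exact div_nonpos_of_nonpos_of_nonneg (by linarith) (by positivity)
    rw [hρa, hn₁a, div_sqrt_eq_neg_sqrt_sq_div ha0]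
  · rw [hρb, hm₁b, div_sqrt_eq_sqrt_sq_div hb0]
  · rw [hρa]; exact norm_div_sqrt_add_I_mul_sqrt a hk0.le (by positivity)
  · rw [hρb]; exact norm_div_sqrt_add_I_mul_sqrt b hk0.le (by positivity)

/-- With `n₀ + 1/2 = (2(m+n)μ² - (m-n)² - μ⁴)/(4μ²)`,
`n₁ = (m - n - μ²)²/(4μ²)`, `m₁ = m - n + n₁`, and `ρ_ℓ`, `ρ̂_ℓ` as defined,
for every real `ℓ < n₀`, writing `k = n₀ - ℓ`, one has
`ρ_ℓ = ε √(n₁/(n₁+k)) + i √(k/(n₁+k))` (with `ε = +1` if `μ² ≥ m - n`,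
`ε = -1` if `μ² ≤ m - n`) and `ρ̂_ℓ = √(m₁/(m₁+k)) + i √(k/(m₁+k))`;
in particular `|ρ_ℓ| = |ρ̂_ℓ| = 1`. -/
theorem rho_formula
    (m n μ : ℝ) (hmn : n ≤ m) (hn : 0 < n) (hμ : 0 < μ)
    (h1 : (Real.sqrt m - Real.sqrt n) ^ 2 ≤ μ ^ 2)
    (h2 : μ ^ 2 ≤ (Real.sqrt m + Real.sqrt n) ^ 2)
    (n₀ n₁ m₁ : ℝ)
    (hn₀ : n₀ + 1 / 2 = (2 * (m + n) * μ ^ 2 - (m - n) ^ 2 - μ ^ 4) / (4 * μ ^ 2))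
    (hn₁ : n₁ = (m - n - μ ^ 2) ^ 2 / (4 * μ ^ 2))
    (hm₁ : m₁ = m - n + n₁)
    (ℓ : ℝ) (hℓ : ℓ < n₀) (k : ℝ) (hk : k = n₀ - ℓ)
    (s p : ℝ) (hs : s = Real.sqrt (n - ℓ - 1 / 2)) (hp : p = Real.sqrt (m - ℓ - 1 / 2))
    (ρ ρhat : ℂ)
    (hρ : ρ = (((μ ^ 2 - m + n) / (2 * μ * s) : ℝ) : ℂ)
        + Complex.I * ((Real.sqrt (1 - (μ ^ 2 - m + n) ^ 2 / (4 * μ ^ 2 * s ^ 2)) : ℝ) : ℂ))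
    (hρhat : ρhat = (((μ ^ 2 + m - n) / (2 * μ * p) : ℝ) : ℂ)
        + Complex.I * ((Real.sqrt (1 - (μ ^ 2 + m - n) ^ 2 / (4 * μ ^ 2 * p ^ 2)) : ℝ) : ℂ)) :
    (m - n ≤ μ ^ 2 →
      ρ = ((Real.sqrt (n₁ / (n₁ + k)) : ℝ) : ℂ)
          + Complex.I * ((Real.sqrt (k / (n₁ + k)) : ℝ) : ℂ)) ∧
    (μ ^ 2 ≤ m - n →
      ρ = ((-Real.sqrt (n₁ / (n₁ + k)) : ℝ) : ℂ)
          + Complex.I * ((Real.sqrt (k / (n₁ + k)) : ℝ) : ℂ)) ∧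
    ρhat = ((Real.sqrt (m₁ / (m₁ + k)) : ℝ) : ℂ)
          + Complex.I * ((Real.sqrt (k / (m₁ + k)) : ℝ) : ℂ) ∧
    ‖ρ‖ = 1 ∧ ‖ρhat‖ = 1 :=
  rho_formula_general m n μ hmn hμ n₀ n₁ m₁ hn₀ hn₁ hm₁ ℓ hℓ k hk s p hs hp ρ ρhat hρ hρhat
end

section
/- There exist absolute constants c > 0 and c' > 0 such that for every integer m ≥ 1 and every strictly decreasing sequence 2π > θ₁ > θ₂ > … > θ_m > 0, setting s_ℓ = θ₁ + θ₂ + … + θ_ℓ, one has |Σ_{j=1}^{m} e^{i s_j}| ≤ c·(θ_m^{−1} + (2π − θ₁)^{−1}) ≤ c'·(|e^{i θ_m/2} − 1|^{−1} + |e^{i θ₁/2} + 1|^{−1}). -/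
/-!
Put `a j = e^{i s_j}` and `w j = (e^{i θ_j} - 1)⁻¹`, so that `a j = (a (j+1) - a j) * w (j+1)`.
Summation by parts bounds the sum by `1 + ‖w m‖ + ‖w 1‖ + ∑ ‖w j - w (j+1)‖`. Since
`w j = -(1 + i cot (θ_j / 2)) / 2` and `cot` decreases on `(0, π)`, the variation telescopes to
`(cot (θ_m / 2) - cot (θ_1 / 2)) / 2`, so the sum is at most
`1 + 1 / sin (θ_m / 2) + 1 / sin (θ_1 / 2)`. Jordan's inequality turns `1 / sin (t / 2)` into
`π (1 / t + 1 / (2π - t))`. The second inequality is `|e^{ix} - 1| ≤ |x|`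
at `x = θ_m / 2` and at `x = θ_1 / 2 - π`.
-/

open Finset
open scoped Real

namespace Finset

variable {R : Type*}

theorem sum_Ico_eq_of_eq_sub_mul [Ring R] {a w : ℕ → R} {k n : ℕ} (hkn : k ≤ n)
    (h : ∀ j ∈ Ico k n, a j = (a (j + 1) - a j) * w (j + 1)) :
    ∑ j ∈ Ico k n, a j = a n * w n - a k * w k + ∑ j ∈ Ico k n, a j * (w j - w (j + 1)) := by
  rw [← sum_Ico_sub (fun j ↦ a j * w j) hkn, ← sum_add_distrib]
  refine sum_congr rfl fun j hj ↦ ?_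
  calc a j = (a (j + 1) - a j) * w (j + 1) := h j hj
    _ = _ := by noncomm_ring

theorem norm_sum_Ico_le_of_eq_sub_mul [SeminormedRing R] {a w : ℕ → R} {k n : ℕ} (hkn : k ≤ n)
    (ha : ∀ j, ‖a j‖ ≤ 1) (h : ∀ j ∈ Ico k n, a j = (a (j + 1) - a j) * w (j + 1)) :
    ‖∑ j ∈ Ico k n, a j‖ ≤ ‖w n‖ + ‖w k‖ + ∑ j ∈ Ico k n, ‖w j - w (j + 1)‖ := by
  have hmul : ∀ j x, ‖a j * x‖ ≤ ‖x‖ := fun j x ↦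
    (norm_mul_le _ _).trans (mul_le_of_le_one_left (norm_nonneg x) (ha j))
  rw [sum_Ico_eq_of_eq_sub_mul hkn h]
  refine (norm_add_le _ _).trans (add_le_add ((norm_sub_le _ _).trans (add_le_add ?_ ?_)) ?_)
  · exact hmul n (w n)
  · exact hmul k (w k)
  · exact (norm_sum_le _ _).trans (sum_le_sum fun j _ ↦ hmul j _)

end Finset

namespace Real

theorem cot_le_cot_of_le {x y : ℝ} (hx : 0 < x) (hxy : x ≤ y) (hy : y < π) : cot y ≤ cot x := by
  have hsx : 0 < sin x := sin_pos_of_pos_of_lt_pi hx (hxy.trans_lt hy)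
  have hsy : 0 < sin y := sin_pos_of_pos_of_lt_pi (hx.trans_le hxy) hy
  have hsub : 0 ≤ sin (y - x) := sin_nonneg_of_nonneg_of_le_pi (by linarith) (by linarith)
  rw [sin_sub] at hsub
  rw [cot_eq_cos_div_sin, cot_eq_cos_div_sin, div_le_div_iff₀ hsy hsx]
  linarith

theorem abs_cot_le_inv_sin {x : ℝ} (hx : 0 < x) (hxπ : x < π) : |cot x| ≤ (sin x)⁻¹ := by
  have hsx : 0 < sin x := sin_pos_of_pos_of_lt_pi hx hxπ
  rw [cot_eq_cos_div_sin, abs_div, abs_of_pos hsx, div_eq_mul_inv]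
  exact mul_le_of_le_one_left (inv_nonneg.2 hsx.le) (abs_cos_le_one x)

theorem inv_sin_half_le_of_le_pi {t : ℝ} (ht : 0 < t) (htπ : t ≤ π) : (sin (t / 2))⁻¹ ≤ π / t := by
  have jordan : 2 / π * (t / 2) ≤ sin (t / 2) := mul_le_sin (by linarith) (by linarith)
  calc (sin (t / 2))⁻¹ ≤ (t / π)⁻¹ :=
        inv_anti₀ (div_pos ht pi_pos) ((le_of_eq (by ring)).trans jordan)
    _ = π / t := inv_div t π

theorem inv_sin_half_le {t : ℝ} (ht : 0 < t) (ht2π : t < 2 * π) :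
    (sin (t / 2))⁻¹ ≤ π * (t⁻¹ + (2 * π - t)⁻¹) := by
  have h₁ : 0 ≤ π * t⁻¹ := by positivity
  have h₂ : 0 ≤ π * (2 * π - t)⁻¹ := mul_nonneg pi_pos.le (inv_nonneg.2 (by linarith))
  rcases le_or_gt t π with htπ | htπ
  · have := inv_sin_half_le_of_le_pi ht htπ
    rw [div_eq_mul_inv π] at this
    linarith
  · have := inv_sin_half_le_of_le_pi (t := 2 * π - t) (by linarith) (by linarith)
    rw [div_eq_mul_inv π, show (2 * π - t) / 2 = π - t / 2 by ring, sin_pi_sub] at this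
    linarith

end Real

namespace Complex

theorem norm_exp_I_mul_ofReal_sub_one_of_pos_of_lt {t : ℝ} (ht : 0 < t) (ht2π : t < 2 * π) :
    ‖exp (I * t) - 1‖ = 2 * Real.sin (t / 2) := by
  rw [norm_exp_I_mul_ofReal_sub_one, Real.norm_of_nonneg]
  exact mul_nonneg zero_le_two (Real.sin_pos_of_pos_of_lt_pi (by linarith) (by linarith)).le

theorem exp_I_mul_ofReal_ne_one {t : ℝ} (ht : 0 < t) (ht2π : t < 2 * π) : exp (I * t) ≠ 1 := by
  intro h
  have := norm_exp_I_mul_ofReal_sub_one_of_pos_of_lt ht ht2π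
  rw [h, sub_self, norm_zero] at this
  linarith [Real.sin_pos_of_pos_of_lt_pi (x := t / 2) (by linarith) (by linarith)]

theorem inv_exp_I_mul_ofReal_sub_one {t : ℝ} (h : exp (I * t) ≠ 1) :
    (exp (I * t) - 1)⁻¹ = -(1 + I * Real.cot (t / 2)) / 2 := by
  have hsub : 1 - exp (I * t) ≠ 0 := sub_ne_zero.2 h.symm
  rw [ofReal_cot, cot_eq_exp_ratio, show 2 * I * ((t / 2 : ℝ) : ℂ) = I * t by push_cast; ring]
  field_simp
  ring

theorem norm_inv_exp_I_mul_ofReal_sub_one_sub {t u : ℝ} (ht : 0 < t) (htu : t ≤ u)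
    (hu : u < 2 * π) :
    ‖(exp (I * u) - 1)⁻¹ - (exp (I * t) - 1)⁻¹‖ = (Real.cot (t / 2) - Real.cot (u / 2)) / 2 := by
  have hcot : Real.cot (u / 2) ≤ Real.cot (t / 2) :=
    Real.cot_le_cot_of_le (by linarith) (by linarith) (by linarith)
  rw [inv_exp_I_mul_ofReal_sub_one (exp_I_mul_ofReal_ne_one (by linarith) hu),
    inv_exp_I_mul_ofReal_sub_one (exp_I_mul_ofReal_ne_one ht (by linarith)),
    show -(1 + I * Real.cot (u / 2)) / 2 - -(1 + I * Real.cot (t / 2)) / 2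
      = I * ((Real.cot (t / 2) - Real.cot (u / 2)) / 2 : ℝ) by push_cast; ring,
    norm_mul, norm_I, one_mul, norm_real, Real.norm_of_nonneg (by linarith)]

theorem norm_exp_I_mul_ofReal_add_one (x : ℝ) :
    ‖exp (I * x) + 1‖ = ‖exp (I * (x - π : ℝ)) - 1‖ := by
  rw [← norm_neg (exp _ - 1), ofReal_sub, mul_sub, exp_sub, mul_comm I (π : ℂ), exp_pi_mul_I]
  ring_nf

theorem inv_abs_le_inv_norm_exp_I_mul_ofReal_sub_one {t : ℝ} (ht : t ≠ 0) (ht2π : |t| < 2 * π) :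
    |t|⁻¹ ≤ ‖exp (I * t) - 1‖⁻¹ := by
  have hsin : Real.sin (t / 2) ≠ 0 := by
    rw [abs_lt] at ht2π
    rw [Ne, Real.sin_eq_zero_iff_of_lt_of_lt (by linarith) (by linarith)]
    exact div_ne_zero ht two_ne_zero
  refine inv_anti₀ ?_ Real.norm_exp_I_mul_ofReal_sub_one_le
  rw [norm_exp_I_mul_ofReal_sub_one]
  exact norm_pos_iff.2 (mul_ne_zero two_ne_zero hsin)

end Complex

open Complex in
theorem norm_sum_exp_I_mul_partialSum_le {θ : ℕ → ℝ} {m : ℕ} (hm : 1 ≤ m)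
    (hθ : AntitoneOn θ (Set.Icc 1 m)) (hθm : 0 < θ m) (hθ1 : θ 1 < 2 * π) :
    ‖∑ j ∈ Icc 1 m, exp (I * ((∑ i ∈ Icc 1 j, θ i : ℝ) : ℂ))‖
      ≤ 1 + (Real.sin (θ m / 2))⁻¹ + (Real.sin (θ 1 / 2))⁻¹ := by
  set a : ℕ → ℂ := fun j ↦ exp (I * ((∑ i ∈ Icc 1 j, θ i : ℝ) : ℂ))
  set w : ℕ → ℂ := fun j ↦ (exp (I * θ j) - 1)⁻¹
  have hbounds : ∀ j ∈ Set.Icc 1 m, 0 < θ j ∧ θ j < 2 * π := fun j hj ↦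
    ⟨hθm.trans_le (hθ hj ⟨hm, le_rfl⟩ hj.2),
      (hθ ⟨le_rfl, hm⟩ hj hj.1).trans_lt hθ1⟩
  have hstep : ∀ j ∈ Ico 1 m, a j = (a (j + 1) - a j) * w (j + 1) := by
    intro j hj
    rw [mem_Ico] at hj
    obtain ⟨hpos, hlt⟩ := hbounds (j + 1) ⟨by omega, by omega⟩
    have hrec : a (j + 1) = a j * exp (I * θ (j + 1)) := by
      simp only [a, sum_Icc_succ_top (by omega : 1 ≤ j + 1), ofReal_add, mul_add, exp_add]
    rw [hrec, ← mul_sub_one, mul_assoc,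
      mul_inv_cancel₀ (sub_ne_zero.2 (exp_I_mul_ofReal_ne_one hpos hlt)), mul_one]
  have hvariation : ∑ j ∈ Ico 1 m, ‖w j - w (j + 1)‖
      = Real.cot (θ m / 2) / 2 - Real.cot (θ 1 / 2) / 2 := by
    rw [← sum_Ico_sub (fun j ↦ Real.cot (θ j / 2) / 2) hm]
    refine sum_congr rfl fun j hj ↦ ?_
    rw [mem_Ico] at hj
    have hj' : j ∈ Set.Icc 1 m := ⟨hj.1, hj.2.le⟩
    have hj1 : j + 1 ∈ Set.Icc 1 m := ⟨by omega, hj.2⟩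
    rw [norm_inv_exp_I_mul_ofReal_sub_one_sub (hbounds _ hj1).1 (hθ hj' hj1 (by omega))
      (hbounds _ hj').2]
    ring
  have hw : ∀ j ∈ Set.Icc 1 m, ‖w j‖ = (Real.sin (θ j / 2))⁻¹ / 2 := fun j hj ↦ by
    rw [norm_inv, norm_exp_I_mul_ofReal_sub_one_of_pos_of_lt (hbounds j hj).1 (hbounds j hj).2,
      mul_inv, inv_eq_one_div 2, one_div_mul_eq_div]
  have hcot : ∀ j ∈ Set.Icc 1 m, |Real.cot (θ j / 2)| ≤ (Real.sin (θ j / 2))⁻¹ := fun j hj ↦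
    Real.abs_cot_le_inv_sin (by linarith [hbounds j hj]) (by linarith [hbounds j hj])
  have hm' : m ∈ Set.Icc 1 m := ⟨hm, le_rfl⟩
  have h1 : 1 ∈ Set.Icc 1 m := ⟨le_rfl, hm⟩
  calc ‖∑ j ∈ Icc 1 m, a j‖ = ‖∑ j ∈ Ico 1 m, a j + a m‖ := by
        rw [← Ico_add_one_right_eq_Icc, sum_Ico_succ_top hm]
    _ ≤ ‖w m‖ + ‖w 1‖ + ∑ j ∈ Ico 1 m, ‖w j - w (j + 1)‖ + 1 :=
        norm_add_le_of_le (norm_sum_Ico_le_of_eq_sub_mul hm (fun j ↦ (norm_exp_I_mul_ofReal _).le)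
          hstep) (norm_exp_I_mul_ofReal _).le
    _ ≤ 1 + (Real.sin (θ m / 2))⁻¹ + (Real.sin (θ 1 / 2))⁻¹ := by
        rw [hvariation, hw m hm', hw 1 h1]
        linarith [le_abs_self (Real.cot (θ m / 2)), neg_abs_le (Real.cot (θ 1 / 2)),
          hcot m hm', hcot 1 h1]

/-- There are absolute constants `c, c' > 0` such that for every `m ≥ 1` and
every strictly decreasing sequence `2π > θ₁ > … > θ_m > 0`, with `s_ℓ = θ₁ + … + θ_ℓ`,
`|Σ_{j=1}^m e^{i s_j}| ≤ c (θ_m⁻¹ + (2π - θ₁)⁻¹)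
  ≤ c' (|e^{i θ_m/2} - 1|⁻¹ + |e^{i θ₁/2} + 1|⁻¹)`. -/
theorem van_der_corput_type_bound :
    ∃ c > (0 : ℝ), ∃ c' > (0 : ℝ), ∀ m : ℕ, 1 ≤ m → ∀ θ : ℕ → ℝ,
      θ 1 < 2 * Real.pi → 0 < θ m →
      (∀ j, 1 ≤ j → j < m → θ (j + 1) < θ j) →
      ‖∑ j ∈ Finset.Icc 1 m,
          Complex.exp (Complex.I * ((∑ i ∈ Finset.Icc 1 j, θ i : ℝ) : ℂ))‖
        ≤ c * ((θ m)⁻¹ + (2 * Real.pi - θ 1)⁻¹) ∧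
      c * ((θ m)⁻¹ + (2 * Real.pi - θ 1)⁻¹)
        ≤ c' * (‖Complex.exp (Complex.I * ((θ m / 2 : ℝ) : ℂ)) - 1‖⁻¹
              + ‖Complex.exp (Complex.I * ((θ 1 / 2 : ℝ) : ℂ)) + 1‖⁻¹) := by
  refine ⟨3 * π, by positivity, 3 * π / 2, by positivity, fun m hm θ hθ1 hθm hdec ↦ ?_⟩
  have hθ : AntitoneOn θ (Set.Icc 1 m) :=
    antitoneOn_of_succ_le Set.ordConnected_Icc fun j _ hj hj1 ↦
      (hdec j hj.1 (Order.succ_le_iff.1 hj1.2)).le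
  have hle : θ m ≤ θ 1 := hθ ⟨le_rfl, hm⟩ ⟨hm, le_rfl⟩ hm
  have hθ1pos : 0 < θ 1 := hθm.trans_le hle
  constructor
  · have hsin_m : (Real.sin (θ m / 2))⁻¹ ≤ π * ((θ m)⁻¹ + (2 * π - θ 1)⁻¹) :=
      (Real.inv_sin_half_le hθm (hle.trans_lt hθ1)).trans (by gcongr)
    have hsin_1 : (Real.sin (θ 1 / 2))⁻¹ ≤ π * ((θ m)⁻¹ + (2 * π - θ 1)⁻¹) :=
      (Real.inv_sin_half_le hθ1pos hθ1).trans (by gcongr)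
    have hone : 1 ≤ (Real.sin (θ m / 2))⁻¹ :=
      (one_le_inv₀ (Real.sin_pos_of_pos_of_lt_pi (by linarith) (by linarith))).2
        (Real.sin_le_one _)
    linarith [norm_sum_exp_I_mul_partialSum_le hm hθ hθm hθ1]
  · have hm_half := Complex.inv_abs_le_inv_norm_exp_I_mul_ofReal_sub_one (t := θ m / 2)
      (by positivity) (by rw [abs_of_pos (by positivity)]; linarith)
    have h1_half := Complex.inv_abs_le_inv_norm_exp_I_mul_ofReal_sub_one (t := θ 1 / 2 - π)
      (by linarith) (by rw [abs_of_neg (by linarith)]; linarith)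
    rw [← Complex.norm_exp_I_mul_ofReal_add_one, abs_of_neg (by linarith)] at h1_half
    rw [abs_of_pos (by positivity)] at hm_half
    calc 3 * π * ((θ m)⁻¹ + (2 * π - θ 1)⁻¹)
        = 3 * π / 2 * ((θ m / 2)⁻¹ + (-(θ 1 / 2 - π))⁻¹) := by
          rw [show -(θ 1 / 2 - π) = (2 * π - θ 1) / 2 by ring, inv_div, inv_div]
          ring
      _ ≤ _ := by gcongr
end

section
/- There exists an absolute constant c > 0 with the following property. For every positive integer n₀, all reals n₁ > 0 and m₁ > 0 with m₁ ≥ n₁ and m₁ ≥ n₀, and all integers 1 ≤ ℓ₁ ≤ ℓ₂ ≤ n₀ − 1, one has |Σ_{ℓ=ℓ₁}^{ℓ₂} η_ℓ| ≤ c·(1 + √(n₁/(n₀ − ℓ₂))). -/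
open Finset

/-- The unit complex number `ρ_j = √(a/(a + k_j)) + i √(k_j/(a + k_j))`, `k_j = n₀ - j`.
Taking `a = n₁` gives `ρ_j` and taking `a = m₁` gives `ρ̂_j`. -/
noncomputable def rhoUnit (n₀ : ℕ) (a : ℝ) (j : ℕ) : ℂ :=
  ((Real.sqrt (a / (a + ((n₀ : ℝ) - j))) : ℝ) : ℂ)
    + Complex.I * ((Real.sqrt (((n₀ : ℝ) - j) / (a + ((n₀ : ℝ) - j))) : ℝ) : ℂ)

/-- `η_ℓ = Π_{j=0}^{ℓ} (ρ_j ρ̂_j)²`. -/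
noncomputable def etaProd (n₀ : ℕ) (n₁ m₁ : ℝ) (ℓ : ℕ) : ℂ :=
  ∏ j ∈ Finset.range (ℓ + 1), (rhoUnit n₀ n₁ j * rhoUnit n₀ m₁ j) ^ 2

/-!
Put `z_j = ρ_j ρ̂_j`, a unit complex number in the open upper half-plane, so that
`η_{ℓ+1} = η_ℓ z_{ℓ+1}²`. For such `z` one has `1 / (z² - 1) = -(1 + i c) / 2` with
`c = cot (arg z)`, hence `η_ℓ = (η_{ℓ+1} - η_ℓ) (-(1 + i c_{ℓ+1}) / 2)`, and summation by parts
(as in the Kusmin–Landau inequality) bounds the sum by the size and the total variation of the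
sequence `c_j`. By the cotangent addition formula `c_j = (x y - 1) / (x + y)` with
`x = √(n₁ / k_j)` and `y = √(m₁ / k_j)`: this is increasing in `j`, at least `-1` because
`y ≥ 1` (as `m₁ ≥ n₀ ≥ k_j`), and at most `x ≤ √(n₁ / (n₀ - ℓ₂))`.
-/

open Complex ComplexConjugate

noncomputable def cotArg (z : ℂ) : ℝ := z.re / z.im

noncomputable def cotAdd (x y : ℝ) : ℝ := (x * y - 1) / (x + y)

theorem cotArg_mul {z w : ℂ} (hz : z.im ≠ 0) (hw : w.im ≠ 0) :
    cotArg (z * w) = cotAdd (cotArg z) (cotArg w) := by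
  simp only [cotArg, cotAdd, mul_re, mul_im]
  rw [← div_div_div_cancel_right₀ (mul_ne_zero hz hw)]
  congr 1 <;> field_simp

theorem cotAdd_le_left {x y : ℝ} (hx : 0 ≤ x) (hy : 0 < y) : cotAdd x y ≤ x := by
  rw [cotAdd, div_le_iff₀ (by positivity)]
  nlinarith

theorem neg_one_le_cotAdd {x y : ℝ} (hx : 0 ≤ x) (hy : 1 ≤ y) : -1 ≤ cotAdd x y := by
  rw [cotAdd, le_div_iff₀ (by positivity)]
  nlinarith

theorem cotAdd_mono {x x' y y' : ℝ} (hx : 0 ≤ x) (hy : 0 < y) (hxx' : x ≤ x') (hyy' : y ≤ y') :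
    cotAdd x y ≤ cotAdd x' y' := by
  rw [cotAdd, cotAdd, div_le_div_iff₀ (by positivity) (by linarith)]
  nlinarith [mul_nonneg (sub_nonneg.2 hxx') (sub_nonneg.2 hyy'), mul_nonneg hx (sub_nonneg.2 hyy'),
    mul_nonneg (sub_nonneg.2 hxx') hy.le]

theorem sq_sub_one_mul_eq_one {z : ℂ} (hz : ‖z‖ = 1) (him : z.im ≠ 0) :
    (z ^ 2 - 1) * (-(1 + I * cotArg z) / 2) = 1 := by
  have hconj : z * conj z = 1 := by
    rw [mul_conj, normSq_eq_norm_sq, hz, one_pow, ofReal_one]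
  have hconj_eq : conj z = z.re - z.im * I := by
    conv_lhs => rw [← re_add_im (conj z), conj_re, conj_im, ofReal_neg]
    ring
  have him' : (z.im : ℂ) ≠ 0 := ofReal_ne_zero.2 him
  calc (z ^ 2 - 1) * (-(1 + I * cotArg z) / 2)
      = z * ((z - conj z) * (-(1 + I * cotArg z) / 2)) := by rw [← hconj]; ring
    _ = z * conj z := by
      congr 1
      rw [sub_conj, hconj_eq, cotArg]
      push_cast
      field_simp
      linear_combination -z.re * I_sq
    _ = 1 := hconj

theorem norm_sum_range_sub_mul_le {u : ℕ → ℂ} {c : ℕ → ℝ} {n : ℕ} (hu : ∀ i ≤ n, ‖u i‖ ≤ 1)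
    (hc : MonotoneOn c (Set.Iio n)) :
    ‖∑ i ∈ range n, (u (i + 1) - u i) * c i‖ ≤ 2 * (|c (n - 1)| + (c (n - 1) - c 0)) := by
  have hdiff : ∀ k ≤ n, ‖u k - u 0‖ ≤ 2 := fun k hk =>
    (norm_sub_le _ _).trans (by linarith [hu k hk, hu 0 (Nat.zero_le n)])
  have hparts := sum_range_by_parts (fun i => c i) (fun i => u (i + 1) - u i) n
  simp only [sum_range_sub, real_smul] at hparts
  simp_rw [mul_comm _ ((c _ : ℂ)), hparts]
  calc _ ≤ ‖(c (n - 1) : ℂ) * (u n - u 0)‖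
        + ‖∑ i ∈ range (n - 1), ((c (i + 1) - c i : ℝ) : ℂ) * (u (i + 1) - u 0)‖ := by
          push_cast; exact norm_sub_le _ _
    _ ≤ |c (n - 1)| * 2 + ∑ i ∈ range (n - 1), (c (i + 1) - c i) * 2 := by
      gcongr
      · rw [norm_mul, norm_real, Real.norm_eq_abs]
        exact mul_le_mul_of_nonneg_left (hdiff n le_rfl) (abs_nonneg _)
      · refine (norm_sum_le _ _).trans (sum_le_sum fun i hi => ?_)
        have hi : i + 1 < n := by simpa [Nat.lt_sub_iff_add_lt] using hi
        have hmono : c i ≤ c (i + 1) :=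
          hc (by simp; omega) (by simpa using hi) (Nat.le_succ i)
        rw [norm_mul, norm_real, Real.norm_of_nonneg (sub_nonneg.2 hmono)]
        exact mul_le_mul_of_nonneg_left (hdiff _ hi.le) (sub_nonneg.2 hmono)
    _ = 2 * (|c (n - 1)| + (c (n - 1) - c 0)) := by
      rw [← sum_mul, sum_range_sub c]; ring

theorem norm_sum_range_le_of_monotoneOn_cotArg {u z : ℕ → ℂ} {n : ℕ} {L U : ℝ}
    (hu : ∀ i ≤ n, ‖u i‖ ≤ 1) (hz : ∀ i < n, ‖z i‖ = 1) (him : ∀ i < n, (z i).im ≠ 0)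
    (hstep : ∀ i < n, u (i + 1) = u i * z i ^ 2)
    (hmono : MonotoneOn (fun i => cotArg (z i)) (Set.Iio n))
    (hbound : ∀ i < n, cotArg (z i) ∈ Set.Icc L U) :
    ‖∑ i ∈ range n, u i‖ ≤ 1 + |L| + |U| + (U - L) := by
  rcases n.eq_zero_or_pos with rfl | hn
  · simp only [range_zero, sum_empty, norm_zero]
    linarith [neg_abs_le U, le_abs_self L]
  set c : ℕ → ℝ := fun i => cotArg (z i)
  have hterm : ∀ i ∈ range n,
      u i = -(u (i + 1) - u i) / 2 - I / 2 * ((u (i + 1) - u i) * c i) := by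
    intro i hi
    have hi : i < n := mem_range.1 hi
    calc u i = u i * ((z i ^ 2 - 1) * (-(1 + I * c i) / 2)) := by
          rw [sq_sub_one_mul_eq_one (hz i hi) (him i hi), mul_one]
      _ = _ := by rw [hstep i hi]; ring
  have hsum : ∑ i ∈ range n, u i
      = -(u n - u 0) / 2 - I / 2 * ∑ i ∈ range n, (u (i + 1) - u i) * c i := by
    rw [sum_congr rfl hterm, sum_sub_distrib, ← sum_div, sum_neg_distrib, sum_range_sub,
      ← mul_sum]
  have hfirst : ‖-(u n - u 0) / 2‖ ≤ 1 := by
    rw [norm_div, norm_neg, RCLike.norm_ofNat, div_le_one two_pos]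
    exact (norm_sub_le _ _).trans (by linarith [hu n le_rfl, hu 0 (Nat.zero_le n)])
  have habel := norm_sum_range_sub_mul_le hu hmono
  obtain ⟨hL, -⟩ := hbound 0 hn
  obtain ⟨-, hU⟩ := hbound (n - 1) (by omega)
  have hfirst_le_last : c 0 ≤ c (n - 1) :=
    hmono (Set.mem_Iio.2 hn) (Set.mem_Iio.2 (by omega)) (Nat.zero_le _)
  have hlast : |c (n - 1)| ≤ |L| + |U| :=
    abs_le.2 ⟨by linarith [neg_abs_le L, abs_nonneg U], by linarith [le_abs_self U, abs_nonneg L]⟩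
  have hsecond : ‖I / 2 * ∑ i ∈ range n, (u (i + 1) - u i) * c i‖ ≤ |L| + |U| + (U - L) := by
    rw [norm_mul, norm_div, norm_I, RCLike.norm_ofNat]
    linarith
  rw [hsum]
  exact (norm_sub_le _ _).trans (by linarith)

section RhoUnit

variable {n₀ : ℕ} {a : ℝ} {j : ℕ}

theorem rhoUnit_re : (rhoUnit n₀ a j).re = √(a / (a + (n₀ - j))) := by
  simp [rhoUnit]

theorem rhoUnit_im : (rhoUnit n₀ a j).im = √((n₀ - j) / (a + (n₀ - j))) := by
  simp [rhoUnit]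

theorem norm_rhoUnit (ha : 0 < a) (hj : j ≤ n₀) : ‖rhoUnit n₀ a j‖ = 1 := by
  have hk : (0 : ℝ) ≤ n₀ - j := sub_nonneg.2 (by exact_mod_cast hj)
  rw [Complex.norm_def, Real.sqrt_eq_one, normSq_apply, rhoUnit_re,
    rhoUnit_im, Real.mul_self_sqrt (by positivity), Real.mul_self_sqrt (by positivity)]
  field_simp

theorem rhoUnit_re_pos (ha : 0 < a) (hj : j ≤ n₀) : 0 < (rhoUnit n₀ a j).re := by
  have hk : (0 : ℝ) ≤ n₀ - j := sub_nonneg.2 (by exact_mod_cast hj)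
  rw [rhoUnit_re]
  positivity

theorem rhoUnit_im_pos (ha : 0 < a) (hj : j < n₀) : 0 < (rhoUnit n₀ a j).im := by
  have hk : (0 : ℝ) < n₀ - j := sub_pos.2 (by exact_mod_cast hj)
  rw [rhoUnit_im]
  positivity

theorem cotArg_rhoUnit (ha : 0 < a) (hj : j < n₀) : cotArg (rhoUnit n₀ a j) = √(a / (n₀ - j)) := by
  have hk : (0 : ℝ) < n₀ - j := sub_pos.2 (by exact_mod_cast hj)
  rw [cotArg, rhoUnit_re, rhoUnit_im, ← Real.sqrt_div (by positivity)]
  congr 1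
  field_simp

end RhoUnit

section RhoProd

variable {n₀ : ℕ} {n₁ m₁ : ℝ} {j : ℕ}

theorem norm_rhoUnit_mul (hn₁ : 0 < n₁) (hm₁ : 0 < m₁) (hj : j ≤ n₀) :
    ‖rhoUnit n₀ n₁ j * rhoUnit n₀ m₁ j‖ = 1 := by
  rw [norm_mul, norm_rhoUnit hn₁ hj, norm_rhoUnit hm₁ hj, one_mul]

theorem rhoUnit_mul_im_pos (hn₁ : 0 < n₁) (hm₁ : 0 < m₁) (hj : j < n₀) :
    0 < (rhoUnit n₀ n₁ j * rhoUnit n₀ m₁ j).im := by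
  rw [mul_im]
  have := rhoUnit_re_pos hn₁ hj.le
  have := rhoUnit_re_pos hm₁ hj.le
  have := rhoUnit_im_pos hn₁ hj
  have := rhoUnit_im_pos hm₁ hj
  positivity

theorem cotArg_rhoUnit_mul (hn₁ : 0 < n₁) (hm₁ : 0 < m₁) (hj : j < n₀) :
    cotArg (rhoUnit n₀ n₁ j * rhoUnit n₀ m₁ j) = cotAdd √(n₁ / (n₀ - j)) √(m₁ / (n₀ - j)) := by
  rw [cotArg_mul (rhoUnit_im_pos hn₁ hj).ne' (rhoUnit_im_pos hm₁ hj).ne', cotArg_rhoUnit hn₁ hj,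
    cotArg_rhoUnit hm₁ hj]

theorem cotArg_rhoUnit_mul_mono (hn₁ : 0 < n₁) (hm₁ : 0 < m₁) {j' : ℕ} (hjj' : j ≤ j')
    (hj' : j' < n₀) :
    cotArg (rhoUnit n₀ n₁ j * rhoUnit n₀ m₁ j) ≤ cotArg (rhoUnit n₀ n₁ j' * rhoUnit n₀ m₁ j') := by
  have hk' : (0 : ℝ) < n₀ - j' := sub_pos.2 (by exact_mod_cast hj')
  have hkk' : (n₀ : ℝ) - j' ≤ n₀ - j := by gcongr
  have hk : (0 : ℝ) < n₀ - j := hk'.trans_le hkk'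
  rw [cotArg_rhoUnit_mul hn₁ hm₁ (hjj'.trans_lt hj'), cotArg_rhoUnit_mul hn₁ hm₁ hj']
  apply cotAdd_mono (Real.sqrt_nonneg _) (Real.sqrt_pos.2 (by positivity)) <;>
    exact Real.sqrt_le_sqrt (div_le_div_of_nonneg_left (by positivity) hk' hkk')

theorem cotArg_rhoUnit_mul_le (hn₁ : 0 < n₁) (hm₁ : 0 < m₁) (hj : j < n₀) :
    cotArg (rhoUnit n₀ n₁ j * rhoUnit n₀ m₁ j) ≤ √(n₁ / (n₀ - j)) := by
  have hk : (0 : ℝ) < n₀ - j := sub_pos.2 (by exact_mod_cast hj)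
  rw [cotArg_rhoUnit_mul hn₁ hm₁ hj]
  exact cotAdd_le_left (Real.sqrt_nonneg _) (Real.sqrt_pos.2 (by positivity))

theorem neg_one_le_cotArg_rhoUnit_mul (hn₁ : 0 < n₁) (hm₁ : (n₀ : ℝ) ≤ m₁) (hj : j < n₀) :
    -1 ≤ cotArg (rhoUnit n₀ n₁ j * rhoUnit n₀ m₁ j) := by
  have hk : (0 : ℝ) < n₀ - j := sub_pos.2 (by exact_mod_cast hj)
  have hkm : (n₀ : ℝ) - j ≤ m₁ := by linarith [(Nat.cast_nonneg j : (0 : ℝ) ≤ j)]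
  rw [cotArg_rhoUnit_mul hn₁ (hk.trans_le hkm) hj]
  refine neg_one_le_cotAdd (Real.sqrt_nonneg _) (Real.one_le_sqrt.2 ?_)
  rwa [one_le_div hk]

theorem etaProd_succ (ℓ : ℕ) :
    etaProd n₀ n₁ m₁ (ℓ + 1)
      = etaProd n₀ n₁ m₁ ℓ * (rhoUnit n₀ n₁ (ℓ + 1) * rhoUnit n₀ m₁ (ℓ + 1)) ^ 2 :=
  prod_range_succ _ _

theorem norm_etaProd (hn₁ : 0 < n₁) (hm₁ : 0 < m₁) {ℓ : ℕ} (hℓ : ℓ ≤ n₀) :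
    ‖etaProd n₀ n₁ m₁ ℓ‖ = 1 := by
  rw [etaProd, norm_prod]
  refine prod_eq_one fun j hj => ?_
  rw [norm_pow, norm_rhoUnit_mul hn₁ hm₁ (by simp at hj; omega), one_pow]

end RhoProd

/-- There is an absolute constant `c > 0` such that for every positive
integer `n₀`, reals `m₁ ≥ n₁ > 0` with `m₁ ≥ n₀`, and all integers
`1 ≤ ℓ₁ ≤ ℓ₂ ≤ n₀ - 1`, one has `|Σ_{ℓ=ℓ₁}^{ℓ₂} η_ℓ| ≤ c (1 + √(n₁/(n₀ - ℓ₂)))`. -/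
theorem eta_sum_bound :
    ∃ c > (0 : ℝ), ∀ n₀ : ℕ, 0 < n₀ → ∀ n₁ m₁ : ℝ,
      0 < n₁ → n₁ ≤ m₁ → (n₀ : ℝ) ≤ m₁ →
      ∀ ℓ₁ ℓ₂ : ℕ, 1 ≤ ℓ₁ → ℓ₁ ≤ ℓ₂ → ℓ₂ ≤ n₀ - 1 →
      ‖∑ ℓ ∈ Finset.Icc ℓ₁ ℓ₂, etaProd n₀ n₁ m₁ ℓ‖
        ≤ c * (1 + Real.sqrt (n₁ / ((n₀ : ℝ) - ℓ₂))) := by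
  refine ⟨4, by norm_num, fun n₀ _ n₁ m₁ hn₁ hnm hn₀m ℓ₁ ℓ₂ _ h₁₂ h₂ => ?_⟩
  have hm₁ : 0 < m₁ := hn₁.trans_le hnm
  have hℓ₂ : ℓ₂ < n₀ := by omega
  set T := √(n₁ / ((n₀ : ℝ) - ℓ₂))
  have hT : 0 ≤ T := Real.sqrt_nonneg _
  have hsplit : ∑ ℓ ∈ Icc ℓ₁ ℓ₂, etaProd n₀ n₁ m₁ ℓ
      = ∑ i ∈ range (ℓ₂ - ℓ₁), etaProd n₀ n₁ m₁ (ℓ₁ + i) + etaProd n₀ n₁ m₁ ℓ₂ := by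
    rw [← Ico_add_one_right_eq_Icc, sum_Ico_eq_sum_range, Nat.sub_add_comm h₁₂, sum_range_succ,
      Nat.add_sub_cancel' h₁₂]
  have hhead := norm_sum_range_le_of_monotoneOn_cotArg (n := ℓ₂ - ℓ₁) (L := -1) (U := T)
    (u := fun i => etaProd n₀ n₁ m₁ (ℓ₁ + i))
    (z := fun i => rhoUnit n₀ n₁ (ℓ₁ + i + 1) * rhoUnit n₀ m₁ (ℓ₁ + i + 1))
    (fun i hi => (norm_etaProd hn₁ hm₁ (by omega)).le)
    (fun i hi => norm_rhoUnit_mul hn₁ hm₁ (by omega))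
    (fun i hi => (rhoUnit_mul_im_pos hn₁ hm₁ (by omega)).ne')
    (fun i _ => etaProd_succ _)
    (fun i _ i' hi' hii' => cotArg_rhoUnit_mul_mono hn₁ hm₁ (by omega) (by simp at hi'; omega))
    (fun i hi => ⟨neg_one_le_cotArg_rhoUnit_mul hn₁ hn₀m (by omega),
      (cotArg_rhoUnit_mul_mono hn₁ hm₁ (by omega) hℓ₂).trans
        (cotArg_rhoUnit_mul_le hn₁ hm₁ hℓ₂)⟩)
  rw [abs_neg, abs_one, abs_of_nonneg hT] at hhead
  rw [hsplit]
  calc _ ≤ _ := norm_add_le _ _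
    _ ≤ 4 * (1 + T) := by
      rw [norm_etaProd hn₁ hm₁ hℓ₂.le]
      linarith
end

section
/- Suppose that for all integers ℓ with ℓ₁ < ℓ ≤ ℓ₂ one has x_ℓ ≤ x_{ℓ−1}/2 + c + Σ_{j=ℓ₁}^{ℓ−1} b_j x_j. Then x_{ℓ₂} ≤ 2·(x_{ℓ₁} + c)·exp(3·Σ_{j=ℓ₁}^{ℓ₂−1} b_j). -/
/-!
Put `S ℓ = ∑_{ℓ₁ ≤ j < ℓ} b_j x_j`, which is nondecreasing. Since `1/2 + 1/4 + ⋯ ≤ 1`, the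
contraction `x ↦ x / 2` absorbs the additive terms: `x_ℓ ≤ x_{ℓ₁} + 2 (c + S ℓ) =: u ℓ`. Then
`u (ℓ + 1) = u ℓ + 2 b_ℓ x_ℓ ≤ (1 + 2 b_ℓ) u ℓ`, and the linear discrete Grönwall inequality gives
`x_{ℓ₂} ≤ u ℓ₂ ≤ (x_{ℓ₁} + 2c) exp (2 ∑ b_j)`, which is sharper than the claim.
-/

open Finset

section

variable {a N : ℤ} {c : ℝ}

theorem le_add_two_mul_of_le_half_add {y S : ℤ → ℝ} (hya : 0 ≤ y a) (hc : 0 ≤ c) (hSa : 0 ≤ S a)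
    (hS : ∀ ℓ, a ≤ ℓ → ℓ < N → S ℓ ≤ S (ℓ + 1))
    (hy : ∀ ℓ, a ≤ ℓ → ℓ < N → y (ℓ + 1) ≤ y ℓ / 2 + c + S (ℓ + 1)) :
    ∀ ℓ, a ≤ ℓ → ℓ ≤ N → y ℓ ≤ y a + 2 * (c + S ℓ) := by
  intro ℓ haℓ
  induction ℓ, haℓ using Int.leInduction with
  | base => intro _; linarith
  | succ ℓ haℓ ih =>
    intro hℓN
    linarith [ih (by omega), hS ℓ haℓ hℓN, hy ℓ haℓ hℓN]

theorem le_mul_exp_sum_of_le_one_add_mul {u f : ℤ → ℝ} (hua : 0 ≤ u a)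
    (hf : ∀ ℓ, a ≤ ℓ → ℓ < N → 0 ≤ 1 + f ℓ)
    (hu : ∀ ℓ, a ≤ ℓ → ℓ < N → u (ℓ + 1) ≤ (1 + f ℓ) * u ℓ) :
    ∀ ℓ, a ≤ ℓ → ℓ ≤ N → u ℓ ≤ u a * Real.exp (∑ j ∈ Ico a ℓ, f j) := by
  intro ℓ haℓ
  induction ℓ, haℓ using Int.leInduction with
  | base => intro _; simp
  | succ ℓ haℓ ih =>
    intro hℓN
    rw [← insert_Ico_right_eq_Ico_add_one haℓ, sum_insert right_notMem_Ico, Real.exp_add]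
    calc u (ℓ + 1) ≤ (1 + f ℓ) * u ℓ := hu ℓ haℓ hℓN
      _ ≤ (1 + f ℓ) * (u a * Real.exp (∑ j ∈ Ico a ℓ, f j)) :=
        mul_le_mul_of_nonneg_left (ih (by omega)) (hf ℓ haℓ hℓN)
      _ ≤ Real.exp (f ℓ) * (u a * Real.exp (∑ j ∈ Ico a ℓ, f j)) := by
        gcongr
        linarith [Real.add_one_le_exp (f ℓ)]
      _ = u a * (Real.exp (f ℓ) * Real.exp (∑ j ∈ Ico a ℓ, f j)) := by ring

theorem le_mul_exp_two_mul_sum_of_le_half_add_sum {x b : ℤ → ℝ} (haN : a ≤ N) (hc : 0 ≤ c)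
    (hx : ∀ ℓ, a ≤ ℓ → ℓ ≤ N → 0 ≤ x ℓ) (hb : ∀ ℓ, a ≤ ℓ → ℓ < N → 0 ≤ b ℓ)
    (hrec : ∀ ℓ, a ≤ ℓ → ℓ < N →
      x (ℓ + 1) ≤ x ℓ / 2 + c + ∑ j ∈ Ico a (ℓ + 1), b j * x j) :
    x N ≤ (x a + 2 * c) * Real.exp (2 * ∑ j ∈ Ico a N, b j) := by
  set S : ℤ → ℝ := fun ℓ ↦ ∑ j ∈ Ico a ℓ, b j * x j
  have hS_succ : ∀ ℓ, a ≤ ℓ → S (ℓ + 1) = S ℓ + b ℓ * x ℓ := fun ℓ haℓ ↦ by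
    simp only [S, ← insert_Ico_right_eq_Ico_add_one haℓ, sum_insert right_notMem_Ico, add_comm]
  have hxa : 0 ≤ x a := hx a le_rfl haN
  have hx_le : ∀ ℓ, a ≤ ℓ → ℓ ≤ N → x ℓ ≤ x a + 2 * (c + S ℓ) :=
    le_add_two_mul_of_le_half_add hxa hc (by simp [S])
      (fun ℓ haℓ hℓN ↦ by
        rw [hS_succ ℓ haℓ]
        linarith [mul_nonneg (hb ℓ haℓ hℓN) (hx ℓ haℓ hℓN.le)])
      hrec
  have hu := le_mul_exp_sum_of_le_one_add_mul (u := fun ℓ ↦ x a + 2 * (c + S ℓ))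
    (f := fun ℓ ↦ 2 * b ℓ) (by simp only [S, Ico_self, sum_empty]; linarith)
    (fun ℓ haℓ hℓN ↦ by linarith [hb ℓ haℓ hℓN])
    (fun ℓ haℓ hℓN ↦ by
      simp only [hS_succ ℓ haℓ]
      nlinarith [hb ℓ haℓ hℓN, hx_le ℓ haℓ hℓN.le]) N haN le_rfl
  simpa [S, mul_sum] using (hx_le N haN le_rfl).trans hu

end

/-- Gronwall-type estimate: if for all `ℓ₁ < ℓ ≤ ℓ₂`
`x_ℓ ≤ x_{ℓ-1}/2 + c + Σ_{j=ℓ₁}^{ℓ-1} b_j x_j`, with `x, b ≥ 0` and `c > 0`, then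
`x_{ℓ₂} ≤ 2 (x_{ℓ₁} + c) exp(3 Σ_{j=ℓ₁}^{ℓ₂-1} b_j)`. -/
theorem gronwall_type_estimate
    (ℓ₁ ℓ₂ : ℤ) (hℓ : ℓ₁ < ℓ₂) (c : ℝ) (hc : 0 < c)
    (x b : ℤ → ℝ)
    (hx : ∀ ℓ, ℓ₁ ≤ ℓ → ℓ ≤ ℓ₂ → 0 ≤ x ℓ)
    (hb : ∀ ℓ, ℓ₁ ≤ ℓ → ℓ ≤ ℓ₂ - 1 → 0 ≤ b ℓ)
    (hrec : ∀ ℓ, ℓ₁ < ℓ → ℓ ≤ ℓ₂ →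
      x ℓ ≤ x (ℓ - 1) / 2 + c + ∑ j ∈ Finset.Icc ℓ₁ (ℓ - 1), b j * x j) :
    x ℓ₂ ≤ 2 * (x ℓ₁ + c) * Real.exp (3 * ∑ j ∈ Finset.Icc ℓ₁ (ℓ₂ - 1), b j) := by
  simp_rw [Icc_sub_one_right_eq_Ico] at hrec ⊢
  have hb' : ∀ ℓ, ℓ₁ ≤ ℓ → ℓ < ℓ₂ → 0 ≤ b ℓ := fun ℓ h h' ↦ hb ℓ h (by omega)
  have hsharp := le_mul_exp_two_mul_sum_of_le_half_add_sum hℓ.le hc.le hx hb'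
    fun ℓ h h' ↦ by simpa using hrec (ℓ + 1) (by omega) (by omega)
  have hsum : 0 ≤ ∑ j ∈ Ico ℓ₁ ℓ₂, b j :=
    sum_nonneg fun j hj ↦ hb' j (mem_Ico.1 hj).1 (mem_Ico.1 hj).2
  calc x ℓ₂ ≤ (x ℓ₁ + 2 * c) * Real.exp (2 * ∑ j ∈ Ico ℓ₁ ℓ₂, b j) := hsharp
    _ ≤ 2 * (x ℓ₁ + c) * Real.exp (3 * ∑ j ∈ Ico ℓ₁ ℓ₂, b j) := by
      have hx₁ := hx ℓ₁ le_rfl hℓ.le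
      gcongr <;> linarith
end
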